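/- Fix n ≥ 2 and 1 ≤ k ≤ n, and let (1^k) denote the single-column partition. On SVT^n((1^k)), extending every operator x by x(0) = 0, the crystal and K-crystal operators satisfy: (a) for all i with 1 ≤ i < n and all T, f_i^K T = 0 if and only if f_i T = 0, and f_i f_i^K T = 0 = f_i^K f_i T; (b) for all i, j with |i − j| > 1, f_i^K f_j = f_j f_i^K and f_i^K f_j^K = f_j^K f_i^K; (c) for all 1 ≤ i < n − 1, f_{i+1}^K ∘ f_i = f_i ∘ f_{i+1} ∘ f_i^K. -/

import Mathlib

open scoped Classical

noncomputable section

namespace SVTCrystal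

/-- A filling assigns to each (row, column) position (0-indexed) a finite set of entries. -/
abbrev Filling : Type := ℕ → ℕ → Finset ℕ

/-- `lam` is a partition shape with at most `n` rows. -/
def IsPartitionShape (n : ℕ) (lam : ℕ → ℕ) : Prop :=
  (∀ r, lam (r + 1) ≤ lam r) ∧ (∀ r, n ≤ r → lam r = 0)

/-- Semistandard set-valued tableau of shape `lam` with entries in `{1,…,n}`. -/
structure IsSVT (n : ℕ) (lam : ℕ → ℕ) (t : Filling) : Prop where
  boxNonempty : ∀ r c, c < lam r → (t r c).Nonempty
  emptyOutside : ∀ r c, ¬ c < lam r → t r c = ∅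
  entryBounds : ∀ r c a, a ∈ t r c → 1 ≤ a ∧ a ≤ n
  rowWeak : ∀ r c a b, a ∈ t r c → b ∈ t r (c + 1) → a ≤ b
  colStrict : ∀ r c a b, a ∈ t r c → b ∈ t (r + 1) c → a < b

/-- Semistandard Young tableau: a set-valued tableau all of whose boxes are singletons. -/
def IsSSYT (n : ℕ) (lam : ℕ → ℕ) (t : Filling) : Prop :=
  IsSVT n lam t ∧ ∀ r c, c < lam r → (t r c).card = 1

/-- The weight: `wt n lam t j` is the number of boxes of `t` containing the entry `j`. -/
def wt (n : ℕ) (lam : ℕ → ℕ) (t : Filling) (j : ℕ) : ℕ :=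
  ((Finset.range n ×ˢ Finset.range (lam 0)).filter (fun p => j ∈ t p.1 p.2)).card

/-- The excess: total number of extra entries. -/
def excess (n : ℕ) (lam : ℕ → ℕ) (t : Filling) : ℕ :=
  ∑ p ∈ Finset.range n ×ˢ Finset.range (lam 0), ((t p.1 p.2).card - 1)

/-- Column `c` contains the entry `a`. -/
def colHas (n : ℕ) (t : Filling) (a c : ℕ) : Prop := ∃ r, r < n ∧ a ∈ t r c

/-- The sign of column `c` for the `i`-signature rule: `+` (true) if the column contains `i`
but not `i+1`, `-` (false) if it contains `i+1` but not `i`. -/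
def colSign (n : ℕ) (t : Filling) (i c : ℕ) : Option Bool :=
  if colHas n t i c ∧ ¬ colHas n t (i + 1) c then some true
  else if colHas n t (i + 1) c ∧ ¬ colHas n t i c then some false
  else none

/-- The number of `-` (false) signs left uncanceled after scanning the word left-to-right,
iteratively canceling `-+` pairs. -/
def mctr (w : List Bool) : ℕ := w.foldl (fun cnt b => if b then cnt - 1 else cnt + 1) 0

/-- The number of `+` (true) signs left uncanceled, scanning right-to-left. -/
def pctr (w : List Bool) : ℕ := w.foldr (fun b cnt => if b then cnt + 1 else cnt - 1) 0

/-- The word of column signs of the columns before column `c`. -/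
def colWordBefore (n : ℕ) (t : Filling) (i c : ℕ) : List Bool :=
  (List.range c).filterMap (colSign n t i)

/-- The word of column signs of the columns after column `c` (among columns `< ncols`). -/
def colWordAfter (n ncols : ℕ) (t : Filling) (i c : ℕ) : List Bool :=
  ((List.range ncols).drop (c + 1)).filterMap (colSign n t i)

/-- Column `c` carries an uncanceled `+` for the `i`-signature rule. -/
def PlusCol (n ncols : ℕ) (t : Filling) (i c : ℕ) : Prop :=
  c < ncols ∧ colSign n t i c = some true ∧ mctr (colWordBefore n t i c) = 0

/-- Column `c` carries an uncanceled `-` for the `i`-signature rule. -/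
def MinusCol (n ncols : ℕ) (t : Filling) (i c : ℕ) : Prop :=
  c < ncols ∧ colSign n t i c = some false ∧ pctr (colWordAfter n ncols t i c) = 0

/-- Column `c` is the rightmost uncanceled `+`. -/
def fBoxCol (n ncols : ℕ) (t : Filling) (i c : ℕ) : Prop :=
  PlusCol n ncols t i c ∧ ∀ c', PlusCol n ncols t i c' → c' ≤ c

/-- Column `c` is the leftmost uncanceled `-`. -/
def eBoxCol (n ncols : ℕ) (t : Filling) (i c : ℕ) : Prop :=
  MinusCol n ncols t i c ∧ ∀ c', MinusCol n ncols t i c' → c ≤ c'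

/-- Replace the content of the box in row `r`, column `c` by `A`. -/
def updateBox (t : Filling) (r c : ℕ) (A : Finset ℕ) : Filling :=
  fun r' c' => if r' = r ∧ c' = c then A else t r' c'

/-- The set-valued crystal operator `f_i` (signature rule). -/
def fRaw (n : ℕ) (lam : ℕ → ℕ) (i : ℕ) (t : Filling) : Option Filling :=
  if h : ∃ c, fBoxCol n (lam 0) t i c then
    let c := Classical.choose h
    if hr : ∃ r, r < n ∧ i ∈ t r c then
      let r := Classical.choose hr
      if i ∈ t r (c + 1) then
        some (updateBox (updateBox t r (c + 1) ((t r (c + 1)).erase i)) r c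
          (insert (i + 1) (t r c)))
      else some (updateBox t r c (insert (i + 1) ((t r c).erase i)))
    else none
  else none

/-- The set-valued crystal operator `e_i` (signature rule). -/
def eRaw (n : ℕ) (lam : ℕ → ℕ) (i : ℕ) (t : Filling) : Option Filling :=
  if h : ∃ c, eBoxCol n (lam 0) t i c then
    let c := Classical.choose h
    if hr : ∃ r, r < n ∧ (i + 1) ∈ t r c then
      let r := Classical.choose hr
      if 0 < c ∧ (i + 1) ∈ t r (c - 1) then
        some (updateBox (updateBox t r (c - 1) ((t r (c - 1)).erase (i + 1))) r c
          (insert i (t r c)))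
      else some (updateBox t r c (insert i ((t r c).erase (i + 1))))
    else none
  else none

/-- Iterate a partially-defined operator. -/
def iterOpt (g : Filling → Option Filling) : ℕ → Filling → Option Filling
  | 0, t => some t
  | m + 1, t => (iterOpt g m t).bind g

/-- Highest weight (Yamanouchi) elements. -/
def IsYamanouchi (n : ℕ) (lam : ℕ → ℕ) (t : Filling) : Prop :=
  ∀ i, 1 ≤ i → i < n → eRaw n lam i t = none

/-- Closure of `t0` under the crystal operators `e_i`, `f_i` for `1 ≤ i < n`. -/
inductive Reach (n : ℕ) (lam : ℕ → ℕ) (t0 : Filling) : Filling → Prop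
  | base : Reach n lam t0 t0
  | stepF : ∀ {t t' : Filling} (i : ℕ), 1 ≤ i → i < n → Reach n lam t0 t →
      fRaw n lam i t = some t' → Reach n lam t0 t'
  | stepE : ∀ {t t' : Filling} (i : ℕ), 1 ≤ i → i < n → Reach n lam t0 t →
      eRaw n lam i t = some t' → Reach n lam t0 t'

/-- The one-row partition `(s)`. -/
def rowShape (s : ℕ) : ℕ → ℕ := fun r => if r = 0 then s else 0

/-- The one-column partition `(1^k)`. -/
def colShape (k : ℕ) : ℕ → ℕ := fun r => if r < k then 1 else 0

/-- The hook partition `(s, 1^e)`. -/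
def hookShape (s e : ℕ) : ℕ → ℕ := fun r => if r = 0 then s else if r ≤ e then 1 else 0

/-! ### K-theory crystal operators (for single rows and single columns) -/

/-- Some box of the tableau contains the entry `a`. -/
def containsEntry (n : ℕ) (lam : ℕ → ℕ) (t : Filling) (a : ℕ) : Prop :=
  ∃ r c, r < n ∧ c < lam r ∧ a ∈ t r c

/-- `p` is the rightmost box of `t` containing `i`. -/
def KBoxF (n : ℕ) (lam : ℕ → ℕ) (t : Filling) (i : ℕ) (p : ℕ × ℕ) : Prop :=
  p.1 < n ∧ p.2 < lam p.1 ∧ i ∈ t p.1 p.2 ∧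
    ∀ q : ℕ × ℕ, q.1 < n → q.2 < lam q.1 → i ∈ t q.1 q.2 → q.2 ≤ p.2

/-- The K-crystal operator `f_i^K`: if `i` occurs in `t` and `i+1` does not, add `i+1` to
the rightmost box containing `i`; otherwise `0`. -/
def fK (n : ℕ) (lam : ℕ → ℕ) (i : ℕ) (t : Filling) : Option Filling :=
  if h : (∃ p : ℕ × ℕ, KBoxF n lam t i p) ∧ ¬ containsEntry n lam t (i + 1) then
    let p := Classical.choose h.1
    some (updateBox t p.1 p.2 (insert (i + 1) (t p.1 p.2)))
  else none

/-- The K-crystal operator `e_i^K`: delete `i+1` from the box containing both `i` and `i+1`,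
if such a box exists; otherwise `0`. -/
def eK (n : ℕ) (lam : ℕ → ℕ) (i : ℕ) (t : Filling) : Option Filling :=
  if h : ∃ p : ℕ × ℕ, p.1 < n ∧ p.2 < lam p.1 ∧ i ∈ t p.1 p.2 ∧ (i + 1) ∈ t p.1 p.2 then
    let p := Classical.choose h
    some (updateBox t p.1 p.2 ((t p.1 p.2).erase (i + 1)))
  else none

/-- `t'` is the result of applying `g` to `t` as many times as possible. -/
def MaxApply (g : Filling → Option Filling) (t t' : Filling) : Prop :=
  (∃ m, iterOpt g m t = some t') ∧ g t' = none

/-- One Demazure step: apply `e_i` as many times as possible, then `e_i^K` as many times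
as possible (here `eKop i` is the `i`-th K-operator). -/
def DemStep (n : ℕ) (lam : ℕ → ℕ) (eKop : ℕ → Filling → Option Filling) (i : ℕ)
    (t t' : Filling) : Prop :=
  ∃ t1, MaxApply (eRaw n lam i) t t1 ∧ MaxApply (eKop i) t1 t'

/-- `DemReach n lam eKop [i₁,…,iℓ] t u` holds when
`u = (e_{iℓ}^K)^max e_{iℓ}^max ⋯ (e_{i₁}^K)^max e_{i₁}^max t`. -/
def DemReach (n : ℕ) (lam : ℕ → ℕ) (eKop : ℕ → Filling → Option Filling) :
    List ℕ → Filling → Filling → Prop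
  | [], t, u => t = u
  | i :: rest, t, u => ∃ t2, DemStep n lam eKop i t t2 ∧ DemReach n lam eKop rest t2 u

/-- The minimal highest weight tableau `u_λ`, whose row `r` boxes are all `{r+1}`. -/
def uTab (lam : ℕ → ℕ) : Filling := fun r c => if c < lam r then {r + 1} else ∅

/-- The K-Demazure crystal associated with a word `[i₁,…,iℓ]`. -/
def KDem (n : ℕ) (lam : ℕ → ℕ) (eKop : ℕ → Filling → Option Filling) (word : List ℕ) :
    Set Filling :=
  {t | IsSVT n lam t ∧ DemReach n lam eKop word t (uTab lam)}

/-! ### Permutations and reduced words -/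

/-- The permutation `s_{i₁} ⋯ s_{iℓ}` of a word `[i₁,…,iℓ]`, where `s_i` swaps `i`, `i+1`. -/
def wordPerm (word : List ℕ) : Equiv.Perm ℕ :=
  (word.map fun i => Equiv.swap i (i + 1)).prod

/-- `word` is a reduced word for `w` in the Coxeter generators `s_1, …, s_{n-1}`. -/
def IsReducedWord (n : ℕ) (w : Equiv.Perm ℕ) (word : List ℕ) : Prop :=
  (∀ i ∈ word, 1 ≤ i ∧ i < n) ∧ wordPerm word = w ∧
    ∀ word' : List ℕ, (∀ i ∈ word', 1 ≤ i ∧ i < n) → wordPerm word' = w →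
      word.length ≤ word'.length

/-- The Coxeter length of a permutation of `{1,…,n}`. -/
def permLength (n : ℕ) (σ : Equiv.Perm ℕ) : ℕ :=
  sInf {l | ∃ word : List ℕ, (∀ i ∈ word, 1 ≤ i ∧ i < n) ∧ wordPerm word = σ ∧
    word.length = l}

/-- The parabolic subgroup generated by `s_2, …, s_{n-1}`. -/
def parabolic (n : ℕ) : Subgroup (Equiv.Perm ℕ) :=
  Subgroup.closure {σ | ∃ i, 2 ≤ i ∧ i < n ∧ σ = Equiv.swap i (i + 1)}

/-! ### Polynomials -/

/-- Polynomials in `x₁, x₂, …` over `ℤ[β]`; the variable `β` is `Polynomial.X`. -/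
abbrev KPoly : Type := MvPolynomial ℕ (Polynomial ℤ)

/-- The scalar `β`. -/
def betaP : KPoly := MvPolynomial.C Polynomial.X

/-- The monomial `x^{wt(T)} = x₁^{wt₁} ⋯ xₙ^{wtₙ}`. -/
def xwt (n : ℕ) (lam : ℕ → ℕ) (t : Filling) : KPoly :=
  ∏ j ∈ Finset.Icc 1 n, (MvPolynomial.X j : KPoly) ^ wt n lam t j

/-- The β-character `∑_{T ∈ S} β^{excess T} x^{wt T}` of a set of tableaux. -/
def charSet (n : ℕ) (lam : ℕ → ℕ) (S : Set Filling) : KPoly :=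
  ∑ᶠ t ∈ S, betaP ^ excess n lam t * xwt n lam t

/-- The symmetric Grothendieck polynomial `𝔊_λ(x₁,…,xₙ; β)`. -/
def Groth (n : ℕ) (lam : ℕ → ℕ) : KPoly :=
  charSet n lam {t | IsSVT n lam t}

/-- The Schur polynomial `s_μ(x₁,…,xₙ)`. -/
def SchurP (n : ℕ) (mu : ℕ → ℕ) : KPoly :=
  ∑ᶠ t ∈ {t : Filling | IsSSYT n mu t}, xwt n mu t

/-- The numerator defining the Demazure–Lascoux operator `ϖ_i`. -/
def DLnum (i : ℕ) (f : KPoly) : KPoly :=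
  (MvPolynomial.X i + betaP * MvPolynomial.X i * MvPolynomial.X (i + 1)) * f -
    (MvPolynomial.X (i + 1) + betaP * MvPolynomial.X i * MvPolynomial.X (i + 1)) *
      (MvPolynomial.rename (Equiv.swap i (i + 1)) f)

/-- `DL` implements the Demazure–Lascoux operators `ϖ_i` for `1 ≤ i < n`:
`(x_i - x_{i+1}) · ϖ_i f` equals the defining numerator. -/
def IsDLOp (n : ℕ) (DL : ℕ → KPoly → KPoly) : Prop :=
  ∀ i, 1 ≤ i → i < n → ∀ f : KPoly,
    (MvPolynomial.X i - MvPolynomial.X (i + 1)) * DL i f = DLnum i f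

/-- `applyDL DL [i₁,…,iℓ] f = ϖ_{i₁} ϖ_{i₂} ⋯ ϖ_{iℓ} f`. -/
def applyDL (DL : ℕ → KPoly → KPoly) : List ℕ → KPoly → KPoly
  | [], f => f
  | i :: rest, f => DL i (applyDL DL rest f)


/-!
In a single column every entry occurs in at most one box. Hence, when `i` occurs and `i + 1` does
not, `f_i` replaces `i` by `i + 1` and `f_i^K` adjoins `i + 1` to `i` in whichever box holds `i`,
which is the same as doing so in every box simultaneously; otherwise both operators vanish.
All three relations thereby reduce to identities between these box-wise maps.
-/

def HasEntry (t : Filling) (a : ℕ) : Prop := ∃ r c, a ∈ t r c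

/-- Both `f_i` and `f_i^K` are defined on a column exactly when this holds. -/
def CanRaise (t : Filling) (i : ℕ) : Prop := HasEntry t i ∧ ¬ HasEntry t (i + 1)

def raiseEntry (i : ℕ) (t : Filling) : Filling :=
  fun r c => if i ∈ t r c then insert (i + 1) ((t r c).erase i) else t r c

def adjoinSucc (i : ℕ) (t : Filling) : Filling :=
  fun r c => if i ∈ t r c then insert (i + 1) (t r c) else t r c

/-- The part of the semistandardness of a column filling that the operators depend on. -/
structure IsColumnFilling (k : ℕ) (t : Filling) : Prop where
  row_lt_and_col_eq_zero : ∀ {a r c}, a ∈ t r c → r < k ∧ c = 0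
  row_eq_of_mem_of_mem : ∀ {a r r' c c'}, a ∈ t r c → a ∈ t r' c' → r = r'

section

variable {n k i j a : ℕ} {t : Filling}

@[simp]
lemma mem_raiseEntry {r c : ℕ} :
    a ∈ raiseEntry i t r c ↔ (a = i + 1 ∧ i ∈ t r c) ∨ (a ≠ i ∧ a ∈ t r c) := by
  unfold raiseEntry
  split_ifs with h
  · simp [h]
  · simp only [h, and_false, false_or, iff_and_self]
    exact fun ha hai => h (hai ▸ ha)

@[simp]
lemma mem_adjoinSucc {r c : ℕ} :
    a ∈ adjoinSucc i t r c ↔ (a = i + 1 ∧ i ∈ t r c) ∨ a ∈ t r c := by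
  unfold adjoinSucc
  split_ifs with h <;> simp [h]

lemma hasEntry_raiseEntry :
    HasEntry (raiseEntry i t) a ↔ (a = i + 1 ∧ HasEntry t i) ∨ (a ≠ i ∧ HasEntry t a) := by
  simp [HasEntry, exists_or]

lemma hasEntry_adjoinSucc :
    HasEntry (adjoinSucc i t) a ↔ (a = i + 1 ∧ HasEntry t i) ∨ HasEntry t a := by
  simp [HasEntry, exists_or]

lemma canRaise_raiseEntry_of_far (hij : i + 1 < j ∨ j + 1 < i) :
    CanRaise (raiseEntry j t) i ↔ CanRaise t i := by
  have : i ≠ j := by omega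
  have : i ≠ j + 1 := by omega
  have : i + 1 ≠ j := by omega
  simp [CanRaise, hasEntry_raiseEntry, *]

lemma canRaise_adjoinSucc_of_far (hij : i + 1 < j ∨ j + 1 < i) :
    CanRaise (adjoinSucc j t) i ↔ CanRaise t i := by
  have : i ≠ j := by omega
  have : i ≠ j + 1 := by omega
  simp [CanRaise, hasEntry_adjoinSucc, *]

lemma raiseEntry_adjoinSucc_comm (hij : i + 1 < j ∨ j + 1 < i) :
    raiseEntry j (adjoinSucc i t) = adjoinSucc i (raiseEntry j t) := by
  funext r c
  ext a
  simp only [mem_raiseEntry, mem_adjoinSucc]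
  grind

lemma adjoinSucc_comm (hij : i + 1 < j ∨ j + 1 < i) :
    adjoinSucc j (adjoinSucc i t) = adjoinSucc i (adjoinSucc j t) := by
  funext r c
  ext a
  simp only [mem_adjoinSucc]
  grind

lemma adjoinSucc_succ_raiseEntry (h : ¬ HasEntry t (i + 1)) :
    adjoinSucc (i + 1) (raiseEntry i t) =
      raiseEntry i (raiseEntry (i + 1) (adjoinSucc i t)) := by
  funext r c
  ext a
  have : i + 1 ∉ t r c := fun h' => h ⟨r, c, h'⟩
  simp only [mem_raiseEntry, mem_adjoinSucc]
  grind

lemma colShape_antitone (k : ℕ) : Antitone (colShape k) := by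
  intro r r' _
  unfold colShape
  split_ifs <;> omega

lemma lt_colShape_iff {r c : ℕ} : c < colShape k r ↔ r < k ∧ c = 0 := by
  unfold colShape
  split_ifs <;> omega

lemma IsSVT.col_lt_of_mem {lam : ℕ → ℕ} (ht : IsSVT n lam t) {r c : ℕ} (ha : a ∈ t r c) :
    c < lam r :=
  by_contra fun h => by simp [ht.emptyOutside r c h] at ha

lemma IsSVT.lt_of_mem_of_mem_of_lt {lam : ℕ → ℕ} (ht : IsSVT n lam t) (hlam : Antitone lam)
    {b r r' c : ℕ} (ha : a ∈ t r c) (hb : b ∈ t r' c) (hr : r < r') : a < b := by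
  induction r', hr using Nat.le_induction generalizing b with
  | base => exact ht.colStrict r c a b ha hb
  | succ m _ ih =>
    obtain ⟨x, hx⟩ := ht.boxNonempty m c ((ht.col_lt_of_mem hb).trans_le (hlam m.le_succ))
    exact (ih hx).trans (ht.colStrict m c x b hx hb)

lemma IsSVT.isColumnFilling (ht : IsSVT n (colShape k) t) : IsColumnFilling k t where
  row_lt_and_col_eq_zero ha := lt_colShape_iff.1 (ht.col_lt_of_mem ha)
  row_eq_of_mem_of_mem {a r r' c c'} ha hb := by
    obtain ⟨-, rfl⟩ := lt_colShape_iff.1 (ht.col_lt_of_mem ha)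
    obtain ⟨-, rfl⟩ := lt_colShape_iff.1 (ht.col_lt_of_mem hb)
    rcases lt_trichotomy r r' with h | h | h
    · exact absurd (ht.lt_of_mem_of_mem_of_lt (colShape_antitone k) ha hb h) (lt_irrefl a)
    · exact h
    · exact absurd (ht.lt_of_mem_of_mem_of_lt (colShape_antitone k) hb ha h) (lt_irrefl a)

lemma updateBox_eq_of_forall_mem {g : Finset ℕ → Finset ℕ} {r c : ℕ}
    (hg : ∀ B, i ∉ B → g B = B) (hu : ∀ r' c', i ∈ t r' c' → r' = r ∧ c' = c) :
    updateBox t r c (g (t r c)) = fun r' c' => g (t r' c') := by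
  funext r' c'
  unfold updateBox
  split_ifs with h
  · rw [h.1, h.2]
  · exact (hg _ fun hi => h (hu r' c' hi)).symm

namespace IsColumnFilling

lemma of_mem_imp {s : Filling} (ht : IsColumnFilling k t) (hi : ¬ HasEntry t (i + 1))
    (hs : ∀ {a r c}, a ∈ s r c → a ∈ t r c ∨ (a = i + 1 ∧ i ∈ t r c)) :
    IsColumnFilling k s where
  row_lt_and_col_eq_zero ha := (hs ha).elim ht.1 fun h => ht.1 h.2
  row_eq_of_mem_of_mem ha hb := by
    rcases hs ha with ha | ⟨rfl, hia⟩ <;> rcases hs hb with hb | ⟨hab, hib⟩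
    · exact ht.row_eq_of_mem_of_mem ha hb
    · exact absurd ⟨_, _, hab ▸ ha⟩ hi
    · exact absurd ⟨_, _, hb⟩ hi
    · exact ht.row_eq_of_mem_of_mem hia hib

lemma colHas_iff (ht : IsColumnFilling k t) (hkn : k ≤ n) : colHas n t a 0 ↔ HasEntry t a :=
  ⟨fun ⟨r, _, ha⟩ => ⟨r, 0, ha⟩, fun ⟨r, c, ha⟩ => by
    obtain ⟨hr, rfl⟩ := ht.1 ha
    exact ⟨r, by omega, ha⟩⟩

lemma containsEntry_iff (ht : IsColumnFilling k t) (hkn : k ≤ n) :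
    containsEntry n (colShape k) t a ↔ HasEntry t a :=
  ⟨fun ⟨r, c, _, _, ha⟩ => ⟨r, c, ha⟩, fun ⟨r, c, ha⟩ => by
    obtain ⟨hr, rfl⟩ := ht.1 ha
    exact ⟨r, 0, by omega, lt_colShape_iff.2 ⟨hr, rfl⟩, ha⟩⟩

lemma exists_fBoxCol_iff (ht : IsColumnFilling k t) (hkn : k ≤ n) :
    (∃ c, fBoxCol n (colShape k 0) t i c) ↔ CanRaise t i := by
  constructor
  · rintro ⟨c, ⟨hc, hsign, -⟩, -⟩
    obtain ⟨-, rfl⟩ := lt_colShape_iff.1 hc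
    unfold colSign at hsign
    split_ifs at hsign with h
    · rwa [ht.colHas_iff hkn, ht.colHas_iff hkn] at h
    all_goals simp at hsign
  · rintro ⟨⟨r, c, hi⟩, hi1⟩
    refine ⟨0, ⟨lt_colShape_iff.2 ⟨Nat.zero_lt_of_lt (ht.1 hi).1, rfl⟩, ?_,
      by simp [colWordBefore, mctr]⟩, fun c' hc' => (lt_colShape_iff.1 hc'.1).2.le⟩
    rw [colSign, if_pos]
    rw [ht.colHas_iff hkn, ht.colHas_iff hkn]
    exact ⟨⟨r, c, hi⟩, hi1⟩

lemma fRaw_eq_some (ht : IsColumnFilling k t) (hkn : k ≤ n) (h : CanRaise t i) :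
    fRaw n (colShape k) i t = some (raiseEntry i t) := by
  have hex : ∃ c, fBoxCol n (colShape k 0) t i c := (ht.exists_fBoxCol_iff hkn).2 h
  have hc : Classical.choose hex = 0 := (lt_colShape_iff.1 (Classical.choose_spec hex).1.1).2
  have hr : ∃ r, r < n ∧ i ∈ t r 0 := (ht.colHas_iff hkn).2 h.1
  obtain ⟨-, hir⟩ := Classical.choose_spec hr
  have huniq : ∀ r' c', i ∈ t r' c' → r' = Classical.choose hr ∧ c' = 0 :=
    fun r' c' h => ⟨ht.row_eq_of_mem_of_mem h hir, (ht.1 h).2⟩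
  rw [fRaw, dif_pos hex]
  simp only [hc]
  rw [dif_pos hr, zero_add, if_neg fun h => absurd (huniq _ _ h).2 one_ne_zero]
  have := updateBox_eq_of_forall_mem
    (g := fun B => if i ∈ B then insert (i + 1) (B.erase i) else B) (fun B hB => if_neg hB) huniq
  rw [if_pos hir] at this
  exact congrArg some this

lemma fRaw_eq_none (ht : IsColumnFilling k t) (hkn : k ≤ n) (h : ¬ CanRaise t i) :
    fRaw n (colShape k) i t = none := by
  rw [fRaw, dif_neg (mt (ht.exists_fBoxCol_iff hkn).1 h)]

lemma fK_eq_some (ht : IsColumnFilling k t) (hkn : k ≤ n) (h : CanRaise t i) :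
    fK n (colShape k) i t = some (adjoinSucc i t) := by
  obtain ⟨⟨r, c, hi⟩, hi1⟩ := h
  obtain ⟨hr, rfl⟩ := ht.1 hi
  have hcond : (∃ p : ℕ × ℕ, KBoxF n (colShape k) t i p) ∧
      ¬ containsEntry n (colShape k) t (i + 1) :=
    ⟨⟨(r, 0), by omega, lt_colShape_iff.2 ⟨hr, rfl⟩, hi, fun q _ _ hq => (ht.1 hq).2.le⟩,
      mt (ht.containsEntry_iff hkn).1 hi1⟩
  obtain ⟨-, -, hp, -⟩ := Classical.choose_spec hcond.1
  have huniq : ∀ r' c', i ∈ t r' c' →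
      r' = (Classical.choose hcond.1).1 ∧ c' = (Classical.choose hcond.1).2 :=
    fun r' c' h => ⟨ht.row_eq_of_mem_of_mem h hp, (ht.1 h).2.trans (ht.1 hp).2.symm⟩
  rw [fK, dif_pos hcond]
  have := updateBox_eq_of_forall_mem
    (g := fun B => if i ∈ B then insert (i + 1) B else B) (fun B hB => if_neg hB) huniq
  rw [if_pos hp] at this
  exact congrArg some this

lemma fK_eq_none (ht : IsColumnFilling k t) (hkn : k ≤ n) (h : ¬ CanRaise t i) :
    fK n (colShape k) i t = none := by
  rw [fK, dif_neg]
  rintro ⟨⟨p, -, -, hp, -⟩, hce⟩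
  exact h ⟨⟨_, _, hp⟩, mt (ht.containsEntry_iff hkn).2 hce⟩

lemma raiseEntry (ht : IsColumnFilling k t) (hi : ¬ HasEntry t (i + 1)) :
    IsColumnFilling k (raiseEntry i t) :=
  ht.of_mem_imp hi fun ha => by rw [mem_raiseEntry] at ha; tauto

lemma adjoinSucc (ht : IsColumnFilling k t) (hi : ¬ HasEntry t (i + 1)) :
    IsColumnFilling k (adjoinSucc i t) :=
  ht.of_mem_imp hi fun ha => by rw [mem_adjoinSucc] at ha; tauto

end IsColumnFilling

lemma fK_eq_none_iff_fRaw_eq_none (ht : IsColumnFilling k t) (hkn : k ≤ n) :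
    fK n (colShape k) i t = none ↔ fRaw n (colShape k) i t = none := by
  by_cases h : CanRaise t i
  · simp [ht.fK_eq_some hkn h, ht.fRaw_eq_some hkn h]
  · simp [ht.fK_eq_none hkn h, ht.fRaw_eq_none hkn h]

lemma fK_bind_fRaw_eq_none (ht : IsColumnFilling k t) (hkn : k ≤ n) :
    (fK n (colShape k) i t).bind (fRaw n (colShape k) i) = none := by
  by_cases h : CanRaise t i
  · rw [ht.fK_eq_some hkn h, Option.bind_some]
    exact (ht.adjoinSucc h.2).fRaw_eq_none hkn
      fun h' => h'.2 (hasEntry_adjoinSucc.2 (Or.inl ⟨rfl, h.1⟩))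
  · rw [ht.fK_eq_none hkn h, Option.bind_none]

lemma fRaw_bind_fK_eq_none (ht : IsColumnFilling k t) (hkn : k ≤ n) :
    (fRaw n (colShape k) i t).bind (fK n (colShape k) i) = none := by
  by_cases h : CanRaise t i
  · rw [ht.fRaw_eq_some hkn h, Option.bind_some]
    exact (ht.raiseEntry h.2).fK_eq_none hkn
      fun h' => by simpa [hasEntry_raiseEntry] using h'.1
  · rw [ht.fRaw_eq_none hkn h, Option.bind_none]

lemma fRaw_bind_fK_comm (ht : IsColumnFilling k t) (hkn : k ≤ n)
    (hij : i + 1 < j ∨ j + 1 < i) :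
    (fRaw n (colShape k) j t).bind (fK n (colShape k) i) =
      (fK n (colShape k) i t).bind (fRaw n (colShape k) j) := by
  by_cases hj : CanRaise t j <;> by_cases hi : CanRaise t i
  · rw [ht.fRaw_eq_some hkn hj, ht.fK_eq_some hkn hi, Option.bind_some, Option.bind_some,
      (ht.raiseEntry hj.2).fK_eq_some hkn ((canRaise_raiseEntry_of_far hij).2 hi),
      (ht.adjoinSucc hi.2).fRaw_eq_some hkn ((canRaise_adjoinSucc_of_far hij.symm).2 hj),
      raiseEntry_adjoinSucc_comm hij]
  · rw [ht.fRaw_eq_some hkn hj, ht.fK_eq_none hkn hi, Option.bind_some, Option.bind_none,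
      (ht.raiseEntry hj.2).fK_eq_none hkn (mt (canRaise_raiseEntry_of_far hij).1 hi)]
  · rw [ht.fRaw_eq_none hkn hj, ht.fK_eq_some hkn hi, Option.bind_some, Option.bind_none,
      (ht.adjoinSucc hi.2).fRaw_eq_none hkn (mt (canRaise_adjoinSucc_of_far hij.symm).1 hj)]
  · rw [ht.fRaw_eq_none hkn hj, ht.fK_eq_none hkn hi, Option.bind_none, Option.bind_none]

lemma fK_bind_fK_comm (ht : IsColumnFilling k t) (hkn : k ≤ n)
    (hij : i + 1 < j ∨ j + 1 < i) :
    (fK n (colShape k) j t).bind (fK n (colShape k) i) =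
      (fK n (colShape k) i t).bind (fK n (colShape k) j) := by
  by_cases hj : CanRaise t j <;> by_cases hi : CanRaise t i
  · rw [ht.fK_eq_some hkn hj, ht.fK_eq_some hkn hi, Option.bind_some, Option.bind_some,
      (ht.adjoinSucc hj.2).fK_eq_some hkn ((canRaise_adjoinSucc_of_far hij).2 hi),
      (ht.adjoinSucc hi.2).fK_eq_some hkn ((canRaise_adjoinSucc_of_far hij.symm).2 hj),
      adjoinSucc_comm hij]
  · rw [ht.fK_eq_some hkn hj, ht.fK_eq_none hkn hi, Option.bind_some, Option.bind_none,
      (ht.adjoinSucc hj.2).fK_eq_none hkn (mt (canRaise_adjoinSucc_of_far hij).1 hi)]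
  · rw [ht.fK_eq_none hkn hj, ht.fK_eq_some hkn hi, Option.bind_some, Option.bind_none,
      (ht.adjoinSucc hi.2).fK_eq_none hkn (mt (canRaise_adjoinSucc_of_far hij.symm).1 hj)]
  · rw [ht.fK_eq_none hkn hj, ht.fK_eq_none hkn hi, Option.bind_none, Option.bind_none]

lemma fRaw_bind_fK_succ (ht : IsColumnFilling k t) (hkn : k ≤ n) :
    (fRaw n (colShape k) i t).bind (fK n (colShape k) (i + 1)) =
      ((fK n (colShape k) i t).bind (fRaw n (colShape k) (i + 1))).bind
        (fRaw n (colShape k) i) := by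
  by_cases hi : CanRaise t i
  swap
  · rw [ht.fRaw_eq_none hkn hi, ht.fK_eq_none hkn hi]
    rfl
  have hraise := ht.raiseEntry hi.2
  have hadjoin := ht.adjoinSucc hi.2
  rw [ht.fRaw_eq_some hkn hi, ht.fK_eq_some hkn hi, Option.bind_some, Option.bind_some]
  by_cases hi2 : HasEntry t (i + 1 + 1)
  · rw [hraise.fK_eq_none hkn fun h => h.2 (hasEntry_raiseEntry.2 (Or.inr ⟨by omega, hi2⟩)),
      hadjoin.fRaw_eq_none hkn fun h => h.2 (hasEntry_adjoinSucc.2 (Or.inr hi2))]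
    rfl
  · have hi2' : ¬ HasEntry (adjoinSucc i t) (i + 1 + 1) := by
      simpa [hasEntry_adjoinSucc] using hi2
    have hcan : CanRaise (raiseEntry (i + 1) (adjoinSucc i t)) i := by
      simp [CanRaise, hasEntry_raiseEntry, hasEntry_adjoinSucc, hi.1]
    rw [hraise.fK_eq_some hkn ⟨by simp [hasEntry_raiseEntry, hi.1], by
        simp [hasEntry_raiseEntry, hi2]⟩,
      hadjoin.fRaw_eq_some hkn ⟨by simp [hasEntry_adjoinSucc, hi.1], hi2'⟩, Option.bind_some,
      (hadjoin.raiseEntry hi2').fRaw_eq_some hkn hcan, adjoinSucc_succ_raiseEntry hi.2]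

end

theorem column_K_operator_relations_general (n k : ℕ) (hkn : k ≤ n) :
    (∀ i, 1 ≤ i → i < n → ∀ t : Filling, IsSVT n (colShape k) t →
      (fK n (colShape k) i t = none ↔ fRaw n (colShape k) i t = none) ∧
      (fK n (colShape k) i t).bind (fRaw n (colShape k) i) = none ∧
      (fRaw n (colShape k) i t).bind (fK n (colShape k) i) = none) ∧
    (∀ i j, 1 ≤ i → i < n → 1 ≤ j → j < n → (i + 1 < j ∨ j + 1 < i) →
      ∀ t : Filling, IsSVT n (colShape k) t →
        (fRaw n (colShape k) j t).bind (fK n (colShape k) i) =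
          (fK n (colShape k) i t).bind (fRaw n (colShape k) j) ∧
        (fK n (colShape k) j t).bind (fK n (colShape k) i) =
          (fK n (colShape k) i t).bind (fK n (colShape k) j)) ∧
    (∀ i, 1 ≤ i → i + 1 < n → ∀ t : Filling, IsSVT n (colShape k) t →
      (fRaw n (colShape k) i t).bind (fK n (colShape k) (i + 1)) =
        ((fK n (colShape k) i t).bind (fRaw n (colShape k) (i + 1))).bind
          (fRaw n (colShape k) i)) := by
  refine ⟨fun i _ _ t ht => ?_, fun i j _ _ _ _ hij t ht => ?_, fun i _ _ t ht => ?_⟩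
  · have ht := ht.isColumnFilling
    exact ⟨fK_eq_none_iff_fRaw_eq_none ht hkn, fK_bind_fRaw_eq_none ht hkn,
      fRaw_bind_fK_eq_none ht hkn⟩
  · have ht := ht.isColumnFilling
    exact ⟨fRaw_bind_fK_comm ht hkn hij, fK_bind_fK_comm ht hkn hij⟩
  · exact fRaw_bind_fK_succ ht.isColumnFilling hkn

/-- on `SVT^n((1ᵏ))` (extending all operators by `x(0) = 0`, via
`Option.bind`): (a) `f_i^K T = 0 ↔ f_i T = 0` and `f_i f_i^K T = 0 = f_i^K f_i T`;
(b) `f_i^K` commutes with `f_j` and with `f_j^K` whenever `|i - j| > 1`;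
(c) `f_{i+1}^K ∘ f_i = f_i ∘ f_{i+1} ∘ f_i^K`. -/
theorem column_K_operator_relations (n k : ℕ) (hn : 2 ≤ n) (hk1 : 1 ≤ k) (hkn : k ≤ n) :
    (∀ i, 1 ≤ i → i < n → ∀ t : Filling, IsSVT n (colShape k) t →
      (fK n (colShape k) i t = none ↔ fRaw n (colShape k) i t = none) ∧
      (fK n (colShape k) i t).bind (fRaw n (colShape k) i) = none ∧
      (fRaw n (colShape k) i t).bind (fK n (colShape k) i) = none) ∧
    (∀ i j, 1 ≤ i → i < n → 1 ≤ j → j < n → (i + 1 < j ∨ j + 1 < i) →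
      ∀ t : Filling, IsSVT n (colShape k) t →
        (fRaw n (colShape k) j t).bind (fK n (colShape k) i) =
          (fK n (colShape k) i t).bind (fRaw n (colShape k) j) ∧
        (fK n (colShape k) j t).bind (fK n (colShape k) i) =
          (fK n (colShape k) i t).bind (fK n (colShape k) j)) ∧
    (∀ i, 1 ≤ i → i + 1 < n → ∀ t : Filling, IsSVT n (colShape k) t →
      (fRaw n (colShape k) i t).bind (fK n (colShape k) (i + 1)) =
        ((fK n (colShape k) i t).bind (fRaw n (colShape k) (i + 1))).bind
          (fRaw n (colShape k) i)) :=
  column_K_operator_relations_general n k hkn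

end SVTCrystal

end
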